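/- arXiv:1107.0133 — 5 statements merged into one kernel-verified Lean document; each statement's English description precedes it below -/
import Mathlib

section
/- Let G and K be finite groups and f : G → K a map such that the number of pairs (x,y) ∈ G × G with f(x·y) = f(x)·f(y) is strictly greater than (7/9)·|G|². Then there exists a group homomorphism h : G → K such that the number of x ∈ G with f(x) = h(x) is at least (5/9)·|G|. -/
/-!
Put `n = |G|` and `diffQuot f x y = f (x y) f(y)⁻¹`, which is constantly `f x` when `f` is a
homomorphism. If `diffQuot f x` differs at `y` and `y'`, one of the pairs `(x y, y⁻¹ y')`,
`(y, y⁻¹ y')` is bad, so `diffQuot f x` has fewer than `4n²/9` non-colliding pairs. Its largest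
fibre then has size `m > 5n/9` (collisions number at most `n m`), and since that fibre alone
accounts for `2m(n - m)` non-colliding pairs, in fact `m > 2n/3`. Call its value `h x`.
The cocycle identity `diffQuot f x (z y) · diffQuot f z y = diffQuot f (x z) y` and the fact that
two sets of size `> 2n/3` meet in more than `n/3` points make `h` multiplicative. Finally the good
pairs number `∑ₓ #{y | diffQuot f x y = f x}`, where a summand with `f x ≠ h x` is below `n/3`,
so more than `7n²/9` good pairs force `f = h` on more than `2n/3` points.
-/

open Finset

lemma Finset.card_filter_comp_equiv {α β : Type*} [Fintype α] [Fintype β] (e : α ≃ β)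
    (P : β → Prop) [DecidablePred P] : #{a | P (e a)} = #{b | P b} :=
  card_bij' (fun a _ => e a) (fun b _ => e.symm b) (by simp) (by simp) (by simp) (by simp)

lemma Finset.card_filter_prod_eq_sum {α β : Type*} [Fintype α] [Fintype β] (P : α → β → Prop)
    [∀ a b, Decidable (P a b)] : #{p : α × β | P p.1 p.2} = ∑ a, #{b | P a b} := by
  simp only [card_filter, ← univ_product_univ, sum_product]

section Fibres

variable {α β : Type*} [Fintype α] [DecidableEq β] (g : α → β)

lemma card_fiber_add_card_fiber_le {k k' : β} (hk : k ≠ k') :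
    #{a | g a = k} + #{a | g a = k'} ≤ Fintype.card α := by
  calc #{a | g a = k} + #{a | g a = k'} ≤ #{a | g a ≠ k'} + #{a | g a = k'} := by
        gcongr with a
        exact fun h => h ▸ hk
    _ = Fintype.card α := by rw [add_comm, card_filter_add_card_filter_not, card_univ]

lemma card_pairs_eq_add_card_pairs_ne :
    #{p : α × α | g p.1 = g p.2} + #{p : α × α | g p.1 ≠ g p.2} = Fintype.card α ^ 2 := by
  rw [card_filter_add_card_filter_not, card_univ, Fintype.card_prod, sq]

lemma card_pairs_eq_eq_sum :
    #{p : α × α | g p.1 = g p.2} = ∑ a, #{b | g b = g a} := by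
  simp only [card_filter_prod_eq_sum (fun a b => g a = g b), eq_comm]

lemma two_mul_card_fiber_mul_card_ne_le (k : β) :
    2 * (#{a | g a = k} * #{a | g a ≠ k}) ≤ #{p : α × α | g p.1 ≠ g p.2} := by
  classical
  set A : Finset α := {a | g a = k}
  set B : Finset α := {a | g a ≠ k}
  have hAB : Disjoint (A ×ˢ B) (B ×ˢ A) :=
    disjoint_product.2 (.inl (disjoint_filter_filter_not _ _ _))
  have hsub : A ×ˢ B ∪ B ×ˢ A ⊆ ({p : α × α | g p.1 ≠ g p.2} : Finset (α × α)) := by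
    intro p hp
    simp only [A, B, mem_union, mem_product, mem_filter_univ] at hp ⊢
    rcases hp with ⟨h1, h2⟩ | ⟨h1, h2⟩
    · exact h1 ▸ Ne.symm h2
    · exact h2 ▸ h1
  calc 2 * (#A * #B) = #(A ×ˢ B ∪ B ×ˢ A) := by
        rw [card_union_of_disjoint hAB, card_product, card_product]; ring
    _ ≤ _ := card_le_card hsub

theorem exists_two_mul_card_lt_three_mul_card_fiber
    (hg : 9 * #{p : α × α | g p.1 ≠ g p.2} < 4 * Fintype.card α ^ 2) :
    ∃ k, 2 * Fintype.card α < 3 * #{a | g a = k} := by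
  have : Nonempty α := Fintype.card_pos_iff.1 (Nat.pos_of_ne_zero fun h0 => by simp [h0] at hg)
  obtain ⟨a₀, -, hmax⟩ := exists_max_image univ (fun a => #{b | g b = g a}) univ_nonempty
  refine ⟨g a₀, ?_⟩
  have hsum : #{p : α × α | g p.1 = g p.2} ≤ Fintype.card α * #{b | g b = g a₀} := by
    rw [card_pairs_eq_eq_sum]
    simpa using sum_le_card_nsmul univ _ _ fun a _ => hmax a (mem_univ a)
  have hsplit := card_filter_add_card_filter_not (s := univ) (fun a => g a = g a₀)
  have hpairs := card_pairs_eq_add_card_pairs_ne g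
  have hquad := two_mul_card_fiber_mul_card_ne_le g (g a₀)
  rw [card_univ] at hsplit
  have h5 : 5 * Fintype.card α < 9 * #{b | g b = g a₀} := by nlinarith
  nlinarith

end Fibres

section DiffQuot

variable {G K : Type*} [Group G] [Group K]

def diffQuot (f : G → K) (x y : G) : K := f (x * y) * (f y)⁻¹

variable (f : G → K)

lemma diffQuot_eq_iff {x y : G} : diffQuot f x y = f x ↔ f (x * y) = f x * f y :=
  mul_inv_eq_iff_eq_mul

lemma diffQuot_mul_diffQuot (x z y : G) :
    diffQuot f x (z * y) * diffQuot f z y = diffQuot f (x * z) y := by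
  simp only [diffQuot, mul_assoc, inv_mul_cancel_left]

lemma diffQuot_eq_of_map_mul_eq {x y y' : G} (h₁ : f (x * y') = f (x * y) * f (y⁻¹ * y'))
    (h₂ : f y' = f y * f (y⁻¹ * y')) : diffQuot f x y = diffQuot f x y' := by
  simp only [diffQuot, h₁, h₂, mul_inv_rev, mul_assoc, mul_inv_cancel_left]

variable [Fintype G] [DecidableEq K]

lemma card_pairs_diffQuot_ne_le (x : G) :
    #{p : G × G | diffQuot f x p.1 ≠ diffQuot f x p.2} ≤
      2 * #{p : G × G | f (p.1 * p.2) ≠ f p.1 * f p.2} := by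
  classical
  set B : Finset (G × G) := {p | f (p.1 * p.2) ≠ f p.1 * f p.2}
  let e₁ : G × G ≃ G × G :=
    ⟨fun p => (x * p.1, p.1⁻¹ * p.2), fun q => (x⁻¹ * q.1, (x⁻¹ * q.1) * q.2),
      fun p => by simp, fun q => by simp [mul_assoc]⟩
  let e₂ : G × G ≃ G × G :=
    ⟨fun p => (p.1, p.1⁻¹ * p.2), fun q => (q.1, q.1 * q.2), fun p => by simp, fun q => by simp⟩
  have hsub : ({p | diffQuot f x p.1 ≠ diffQuot f x p.2} : Finset (G × G)) ⊆
      ({p | e₁ p ∈ B} : Finset (G × G)) ∪ ({p | e₂ p ∈ B} : Finset (G × G)) := by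
    intro p
    simp only [B, e₁, e₂, mem_filter_univ, mem_union, Equiv.coe_fn_mk, mul_assoc,
      mul_inv_cancel_left]
    contrapose!
    exact fun ⟨h₁, h₂⟩ => diffQuot_eq_of_map_mul_eq f h₁ h₂
  calc _ ≤ #{p | e₁ p ∈ B} + #{p | e₂ p ∈ B} := (card_le_card hsub).trans (card_union_le _ _)
    _ = 2 * #B := by
      rw [card_filter_comp_equiv e₁ (· ∈ B), card_filter_comp_equiv e₂ (· ∈ B), two_mul]
      simp

variable {f} {h : G → K}

lemma map_mul_of_two_mul_card_lt (hh : ∀ x, 2 * Fintype.card G < 3 * #{y | diffQuot f x y = h x})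
    (x z : G) : h (x * z) = h x * h z := by
  classical
  set Y₁ : Finset G := {y | diffQuot f x (z * y) = h x}
  set Y₂ : Finset G := {y | diffQuot f z y = h z}
  have hY₁ : #Y₁ = #{y | diffQuot f x y = h x} :=
    card_filter_comp_equiv (Equiv.mulLeft z) (diffQuot f x · = h x)
  have hY₂ : #Y₂ = #{y | diffQuot f z y = h z} := rfl
  have hinter : Y₁ ∩ Y₂ ⊆ ({y | diffQuot f (x * z) y = h x * h z} : Finset G) := by
    intro y
    simp only [Y₁, Y₂, mem_inter, mem_filter_univ]
    rintro ⟨h₁, h₂⟩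
    rw [← diffQuot_mul_diffQuot, h₁, h₂]
  have hunion : #(Y₁ ∪ Y₂) ≤ Fintype.card G := card_le_univ _
  have hsize := card_union_add_card_inter Y₁ Y₂
  have hfibre := card_le_card hinter
  by_contra hne
  have hdisj := card_fiber_add_card_fiber_le (diffQuot f (x * z)) hne
  have := hh x
  have := hh z
  have := hh (x * z)
  omega

lemma three_mul_card_good_pairs_le
    (hh : ∀ x, 2 * Fintype.card G < 3 * #{y | diffQuot f x y = h x}) :
    3 * #{p : G × G | f (p.1 * p.2) = f p.1 * f p.2} ≤
      Fintype.card G * Fintype.card G + 2 * Fintype.card G * #{x | f x = h x} := by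
  set n := Fintype.card G
  have hrow (x : G) :
      3 * #{y | diffQuot f x y = f x} ≤ n + 2 * n * if f x = h x then 1 else 0 := by
    split_ifs with hx
    · have : #{y | diffQuot f x y = f x} ≤ n := card_le_univ _
      omega
    · have := card_fiber_add_card_fiber_le (diffQuot f x) hx
      have := hh x
      omega
  calc 3 * #{p : G × G | f (p.1 * p.2) = f p.1 * f p.2}
      = ∑ x, 3 * #{y | diffQuot f x y = f x} := by
        simp only [card_filter_prod_eq_sum (fun x y => f (x * y) = f x * f y), diffQuot_eq_iff,
          mul_sum]
    _ ≤ ∑ x, (n + 2 * n * if f x = h x then 1 else 0) := sum_le_sum fun x _ => hrow x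
    _ = n * n + 2 * n * #{x | f x = h x} := by
        rw [sum_add_distrib, ← mul_sum, sum_boole, sum_const, card_univ, smul_eq_mul]
        rfl

end DiffQuot

theorem stmt_0_general {G K : Type*} [Group G] [Group K] [Finite G]
    (f : G → K)
    (hf : 9 * Nat.card {p : G × G // f (p.1 * p.2) = f p.1 * f p.2} > 7 * (Nat.card G) ^ 2) :
    ∃ h : G →* K, 9 * Nat.card {x : G // f x = h x} ≥ 5 * Nat.card G := by
  have := Fintype.ofFinite G
  have := Classical.decEq K
  simp only [Nat.card_eq_fintype_card, Fintype.card_subtype] at hf ⊢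
  have hsplit := card_filter_add_card_filter_not (s := univ)
    fun p : G × G => f (p.1 * p.2) = f p.1 * f p.2
  rw [card_univ, Fintype.card_prod, ← sq] at hsplit
  have hmajority (x : G) : ∃ k, 2 * Fintype.card G < 3 * #{y | diffQuot f x y = k} := by
    apply exists_two_mul_card_lt_three_mul_card_fiber
    have := card_pairs_diffQuot_ne_le f x
    linarith
  choose h hh using hmajority
  refine ⟨MonoidHom.mk' h (map_mul_of_two_mul_card_lt hh), ?_⟩
  have hgood := three_mul_card_good_pairs_le hh
  change 5 * Fintype.card G ≤ 9 * #{x | f x = h x}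
  nlinarith

theorem stmt_0 {G K : Type*} [Group G] [Group K] [Finite G] [Finite K]
    (f : G → K)
    (hf : 9 * Nat.card {p : G × G // f (p.1 * p.2) = f p.1 * f p.2} > 7 * (Nat.card G) ^ 2) :
    ∃ h : G →* K, 9 * Nat.card {x : G // f x = h x} ≥ 5 * Nat.card G :=
  stmt_0_general f hf
end

section
/- Let G and K be finite groups, let f : G → K be a fixed function, and suppose h : G → K is a function such that for every x ∈ G, the number of y ∈ G with f(x·y)·f(y)⁻¹ = h(x) is strictly greater than (2/3)·|G|. Then h is a group homomorphism. -/
theorem stmt_2 {G K : Type*} [Group G] [Group K] [Finite G] [Finite K]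
    (f : G → K) (h : G → K)
    (hmaj : ∀ x : G, 3 * Nat.card {y : G // f (x * y) * (f y)⁻¹ = h x} > 2 * Nat.card G) :
    ∀ x y : G, h (x * y) = h x * h y := by
  classical
  intro x y
  haveI : Fintype G := Fintype.ofFinite G
  set n := Nat.card G with hn
  have hcard : ∀ p : G → Prop, [DecidablePred p] → Nat.card {z : G // p z} =
      (Finset.univ.filter p).card := by
    intro p _
    simp [Nat.card_eq_fintype_card, Fintype.card_subtype]
  set A := Finset.univ.filter (fun z : G => f (x * y * z) * (f z)⁻¹ = h (x * y)) with hA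
  set B := Finset.univ.filter (fun z : G => f (y * z) * (f z)⁻¹ = h y) with hB
  set C := Finset.univ.filter (fun z : G => f (x * (y * z)) * (f (y * z))⁻¹ = h x) with hC
  have hAcard : 3 * A.card > 2 * n := by rw [hA, ← hcard]; exact hmaj (x * y)
  have hBcard : 3 * B.card > 2 * n := by rw [hB, ← hcard]; exact hmaj y
  have hCcard : 3 * C.card > 2 * n := by
    rw [hC, ← hcard]
    have : Nat.card {z : G // f (x * (y * z)) * (f (y * z))⁻¹ = h x}
        = Nat.card {w : G // f (x * w) * (f w)⁻¹ = h x} :=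
      Nat.card_congr ((Equiv.mulLeft y).subtypeEquiv fun z => Iff.rfl)
    rw [this]; exact hmaj x
  have hnuniv : (Finset.univ : Finset G).card = n := by
    simp [hn, Nat.card_eq_fintype_card]
  have h1 : (A ∪ B).card ≤ n := hnuniv ▸ Finset.card_le_card (Finset.subset_univ _)
  have h2 : ((A ∩ B) ∪ C).card ≤ n := hnuniv ▸ Finset.card_le_card (Finset.subset_univ _)
  have e1 := Finset.card_inter_add_card_union A B
  have e2 := Finset.card_inter_add_card_union (A ∩ B) C
  have hne : (A ∩ B ∩ C).Nonempty := by
    rw [← Finset.card_pos]; omega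
  obtain ⟨z, hz⟩ := hne
  simp only [Finset.mem_inter, hA, hB, hC, Finset.mem_filter, Finset.mem_univ, true_and] at hz
  obtain ⟨⟨ha, hb⟩, hc⟩ := hz
  have : h (x * y) = (f (x * (y * z)) * (f (y * z))⁻¹) * (f (y * z) * (f z)⁻¹) := by
    rw [← ha, mul_assoc x y z]; group
  rw [this, hc, hb]
end

section
/- Let G and K be finite groups, φ : G → K an injective map, and ψ : G → K a group homomorphism such that the number of x ∈ G with ψ(x) ≠ φ(x) is strictly less than (4/9)·|G|. Then ψ is injective. -/
theorem stmt_3 {G K : Type*} [Group G] [Group K] [Finite G] [Finite K]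
    (φ : G → K) (hφ : Function.Injective φ) (ψ : G →* K)
    (hdist : 9 * Nat.card {x : G // ψ x ≠ φ x} < 4 * Nat.card G) :
    Function.Injective ψ := by
  classical
  by_contra hinj
  have hker : ψ.ker ≠ ⊥ := fun h => hinj ((MonoidHom.ker_eq_bot_iff ψ).mp h)
  have h2 : 2 ≤ Nat.card ψ.ker := (Subgroup.one_lt_card_iff_ne_bot ψ.ker).mpr hker
  -- S injects into the quotient
  have hSinj : Function.Injective
      (fun x : {x : G // ψ x = φ x} => (QuotientGroup.mk x.1 : G ⧸ ψ.ker)) := by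
    rintro ⟨x, hx⟩ ⟨y, hy⟩ h
    have hmem : x⁻¹ * y ∈ ψ.ker := QuotientGroup.eq.mp h
    have h1 : ψ x = ψ y := by
      have : (ψ x)⁻¹ * ψ y = 1 := by simpa using hmem
      exact (inv_mul_eq_one.mp this)
    exact Subtype.ext (hφ (by rw [← hx, ← hy, h1]))
  have hle : Nat.card {x : G // ψ x = φ x} ≤ Nat.card (G ⧸ ψ.ker) :=
    Nat.card_le_card_of_injective _ hSinj
  have hprod : Nat.card (G ⧸ ψ.ker) * Nat.card ψ.ker = Nat.card G :=
    (Subgroup.card_eq_card_quotient_mul_card_subgroup ψ.ker).symm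
  have h2q : 2 * Nat.card (G ⧸ ψ.ker) ≤ Nat.card G := by
    calc 2 * Nat.card (G ⧸ ψ.ker) = Nat.card (G ⧸ ψ.ker) * 2 := Nat.mul_comm _ _
    _ ≤ Nat.card (G ⧸ ψ.ker) * Nat.card ψ.ker := Nat.mul_le_mul_left _ h2
    _ = Nat.card G := hprod
  have hsum : Nat.card {x : G // ψ x = φ x} + Nat.card {x : G // ψ x ≠ φ x}
      = Nat.card G := by
    haveI : Fintype G := Fintype.ofFinite G
    simp only [Nat.card_eq_fintype_card]
    have h1 := Fintype.card_subtype_compl (fun x : G => ψ x = φ x)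
    have h2 := Fintype.card_subtype_le (fun x : G => ψ x = φ x)
    simp only [ne_eq]
    omega
  omega
end

section
/- Let G and K be finite groups with |G| ≤ |K|, let S be a set with |S| ≥ |K|, and let γ : G → S and κ : K → S be injections. Suppose the set Z of pairs (x,y) ∈ G × G for which there exist x', y' ∈ K with γ(x) = κ(x'), γ(y) = κ(y'), and γ(x·y) = κ(x'·y') has cardinality strictly greater than (7/9)·|G|². Then G is isomorphic to a subgroup of K. -/
/-!
Put `f := κ⁻¹ ∘ γ` (a partial inverse of `κ`, extended arbitrarily). On every pair of `Z` the map
`f` is multiplicative, so it fails to be multiplicative on fewer than `2|G|²/9` pairs. This is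
the regime of homomorphism testing: for each `x`, the votes `f (x y) f(y)⁻¹` (`y ∈ G`) collide
on more than `5|G|²/9` pairs, which forces a value `h x` taken by more than `2|G|/3` of them;
two such majorities overlap, whence `h (a b) = h a h b`. Moreover `h x = f x` whenever the row of
`x` in `Z` has at least `|G|/3` elements, and by averaging more than `2|G|/3` of the `x` have such
a row. On these `x`, `κ ∘ h = γ` is injective, and a homomorphism that is injective on more than
half of the group is injective.
-/

open Finset Function Fintype

section Counting
variable {α β : Type*} [Fintype α]

lemma eq_of_card_lt_card_fiber_add_card_fiber [DecidableEq β] (c : α → β) {k k' : β}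
    (h : card α < #{a | c a = k} + #{a | c a = k'}) : k = k' := by
  classical
  obtain ⟨a, ha⟩ := inter_nonempty_of_card_lt_card_add_card (subset_univ _) (subset_univ _) h
  simp only [mem_inter, mem_filter, mem_univ, true_and] at ha
  exact ha.1.symm.trans ha.2

lemma card_filter_comp_eq_comp_eq_sum [DecidableEq β] (c : α → β) :
    #{p : α × α | c p.1 = c p.2} = ∑ a, #{a' | c a' = c a} := by
  rw [card_filter, Fintype.sum_prod_type]
  refine sum_congr rfl fun a _ => ?_
  rw [card_filter]
  simp only [eq_comm]

lemma exists_card_fiber_gt_of_card_collisions [DecidableEq β] (c : α → β)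
    (h : 5 * card α ^ 2 < 9 * #{p : α × α | c p.1 = c p.2}) :
    ∃ k, 2 * card α < 3 * #{a | c a = k} := by
  rcases isEmpty_or_nonempty α with hα | hα
  · simp at h
  obtain ⟨a₀, -, ha₀⟩ := exists_max_image univ (fun a => #{a' | c a' = c a}) univ_nonempty
  set M := #{a | c a = c a₀}
  have hle : ∀ a, #{a' | c a' = c a} ≤ M := fun a => ha₀ a (mem_univ a)
  have hMn : M ≤ card α := card_le_univ _
  have hnM : #{p : α × α | c p.1 = c p.2} ≤ card α * M := by
    rw [card_filter_comp_eq_comp_eq_sum]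
    simpa using sum_le_sum fun a (_ : a ∈ univ) => hle a
  have hsq : #{p : α × α | c p.1 = c p.2} ≤ M * M + (card α - M) * (card α - M) := by
    rw [card_filter_comp_eq_comp_eq_sum, ← sum_filter_add_sum_filter_not univ (c · = c a₀)]
    have hcompl : #{a | ¬c a = c a₀} = card α - M := by
      have := card_filter_add_card_filter_not (s := univ) (c · = c a₀)
      rw [card_univ] at this
      omega
    gcongr ?_ + ?_
    · simpa using sum_le_sum fun a (_ : a ∈ ({a | c a = c a₀} : Finset α)) => hle a
    · rw [← hcompl, ← smul_eq_mul, ← sum_const]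
      refine sum_le_sum fun a ha => card_le_card fun a' ha' => ?_
      simp only [mem_filter, mem_univ, true_and] at ha ha' ⊢
      rwa [ha']
  refine ⟨c a₀, ?_⟩
  -- With `n = card α`: `M² + (n - M)² ≤ 5n²/9` as soon as `n/3 ≤ M ≤ 2n/3`.
  by_contra! hM
  have h3M : card α < 3 * M := by nlinarith
  zify [hMn] at hsq h hM hnM h3M
  nlinarith [mul_nonneg (sub_nonneg.2 h3M.le) (sub_nonneg.2 hM)]

lemma card_eq_sum_card_row [Fintype β] [DecidableEq α] [DecidableEq β] (s : Finset (α × β)) :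
    #s = ∑ a, #{b | (a, b) ∈ s} := by
  calc #s = ∑ p : α × β, if p ∈ s then 1 else 0 := by rw [← card_filter, filter_univ_mem]
    _ = ∑ a, #{b | (a, b) ∈ s} := by simp only [Fintype.sum_prod_type, card_filter]

lemma card_heavy_rows_gt [Fintype β] [DecidableEq α] [DecidableEq β] (s : Finset (α × β))
    (hs : 7 * (card α * card β) < 9 * #s) :
    2 * card α < 3 * #{a | card β ≤ 3 * #{b | (a, b) ∈ s}} := by
  set A : Finset α := {a | card β ≤ 3 * #{b | (a, b) ∈ s}}
  have hrow : ∀ a, 3 * #{b | (a, b) ∈ s} ≤ card β + if a ∈ A then 2 * card β else 0 := by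
    intro a
    have : #{b | (a, b) ∈ s} ≤ card β := card_le_univ _
    split_ifs with ha
    · omega
    · simp only [A, mem_filter, mem_univ, true_and] at ha
      omega
  have hsum : 3 * #s ≤ card α * card β + #A * (2 * card β) := by
    rw [card_eq_sum_card_row, mul_sum]
    calc ∑ a, 3 * #{b | (a, b) ∈ s}
        ≤ ∑ a, (card β + if a ∈ A then 2 * card β else 0) := sum_le_sum fun a _ => hrow a
      _ = card α * card β + #A * (2 * card β) := by
        rw [sum_add_distrib, Fintype.sum_ite_mem, sum_const, sum_const, card_univ,
          smul_eq_mul, smul_eq_mul]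
  by_contra! hA
  nlinarith

end Counting

section HomomorphismTesting
variable {G K : Type*} [Group G] [Group K] [Fintype G] [DecidableEq K]

def defectPairs (f : G → K) : Finset (G × G) := {p | f (p.1 * p.2) ≠ f p.1 * f p.2}

def vote (f : G → K) (x y : G) : K := f (x * y) * (f y)⁻¹

omit [Fintype G] [DecidableEq K] in
lemma vote_mul (f : G → K) (a b y : G) :
    vote f (a * b) y = vote f a (b * y) * vote f b y := by
  simp [vote, mul_assoc]

-- If `f` is multiplicative at `(y, y⁻¹ z)` and at `(x y, y⁻¹ z)`, then `vote f x y = vote f x z`.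
lemma card_vote_ne_le (f : G → K) (x : G) :
    #{p : G × G | vote f x p.1 ≠ vote f x p.2} ≤ 2 * #(defectPairs f) := by
  classical
  have hinj (u : G) : Injective fun p : G × G => (u * p.1, p.1⁻¹ * p.2) := by
    intro p q hpq
    simp only [Prod.mk.injEq, mul_right_inj] at hpq
    obtain ⟨h1, h2⟩ := hpq
    rw [h1, mul_right_inj] at h2
    exact Prod.ext h1 h2
  let B (u : G) : Finset (G × G) := {p | (u * p.1, p.1⁻¹ * p.2) ∈ defectPairs f}
  have hpre (u : G) : #(B u) ≤ #(defectPairs f) :=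
    card_le_card_of_injOn _ (fun p hp => (mem_filter.1 hp).2) (hinj u).injOn
  calc #{p : G × G | vote f x p.1 ≠ vote f x p.2}
      ≤ #(B x ∪ B 1) := by
        refine card_le_card fun p hp => ?_
        simp only [B, defectPairs, mem_union, mem_filter, mem_univ, true_and] at hp ⊢
        contrapose! hp
        obtain ⟨hx, h1⟩ := hp
        simp only [one_mul, mul_assoc, mul_inv_cancel_left] at hx h1
        simp only [vote, hx, h1, mul_inv_rev, mul_assoc, mul_inv_cancel_left]
    _ ≤ 2 * #(defectPairs f) := by
        grw [card_union_le, hpre, hpre]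
        omega

variable (f : G → K) (hf : 9 * #(defectPairs f) < 2 * card G ^ 2)
include hf

lemma exists_card_vote_eq_gt (x : G) :
    ∃ k, 2 * card G < 3 * #{y | vote f x y = k} := by
  refine exists_card_fiber_gt_of_card_collisions _ ?_
  have hsplit := card_filter_add_card_filter_not (s := univ)
    fun p : G × G => vote f x p.1 = vote f x p.2
  have hne := card_vote_ne_le f x
  rw [card_univ, card_prod] at hsplit
  nlinarith

noncomputable def majority (x : G) : K := (exists_card_vote_eq_gt f hf x).choose

lemma card_vote_eq_majority_gt (x : G) :
    2 * card G < 3 * #{y | vote f x y = majority f hf x} :=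
  (exists_card_vote_eq_gt f hf x).choose_spec

lemma majority_mul (a b : G) : majority f hf (a * b) = majority f hf a * majority f hf b := by
  classical
  let Tb : Finset G := {y | vote f b y = majority f hf b}
  let Ta : Finset G := {y | vote f a (b * y) = majority f hf a}
  have hT : card G < 3 * #(Tb ∩ Ta) := by
    have hb : 2 * card G < 3 * #Tb := card_vote_eq_majority_gt f hf b
    have ha : 2 * card G < 3 * #Ta := by
      rw [show #Ta = #{y | vote f a y = majority f hf a} from
        card_equiv (Equiv.mulLeft b) (by simp [Ta])]
      exact card_vote_eq_majority_gt f hf a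
    have := card_inter_add_card_union Tb Ta
    have := card_le_univ (Tb ∪ Ta)
    omega
  have hsub : Tb ∩ Ta ⊆
      ({y | vote f (a * b) y = majority f hf a * majority f hf b} : Finset G) := by
    intro y hy
    simp only [Tb, Ta, mem_inter, mem_filter, mem_univ, true_and] at hy ⊢
    rw [vote_mul, hy.1, hy.2]
  refine eq_of_card_lt_card_fiber_add_card_fiber (vote f (a * b)) ?_
  have := card_le_card hsub
  have := card_vote_eq_majority_gt f hf (a * b)
  omega

lemma majority_eq_of_le_three_mul_card (x : G) (hx : card G ≤ 3 * #{y | f (x * y) = f x * f y}) :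
    majority f hf x = f x := by
  have hsub : ({y | f (x * y) = f x * f y} : Finset G) ⊆ ({y | vote f x y = f x} : Finset G) := by
    intro y hy
    simp only [mem_filter, mem_univ, true_and] at hy ⊢
    rw [vote, hy, mul_inv_cancel_right]
  refine eq_of_card_lt_card_fiber_add_card_fiber (vote f x) ?_
  have := card_le_card hsub
  have := card_vote_eq_majority_gt f hf x
  omega

theorem exists_monoidHom_eq_of_card_defectPairs_lt :
    ∃ h : G →* K, ∀ x, card G ≤ 3 * #{y | f (x * y) = f x * f y} → h x = f x :=
  ⟨MonoidHom.mk' (majority f hf) (majority_mul f hf), majority_eq_of_le_three_mul_card f hf⟩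

end HomomorphismTesting

theorem MonoidHom.injective_of_injOn_of_card_lt {G K : Type*} [Group G] [MulOneClass K] [Fintype G]
    (h : G →* K) (A : Finset G) (hA : Set.InjOn h A) (hcard : card G < 2 * #A) : Injective h := by
  classical
  refine (injective_iff_map_eq_one h).2 fun a ha => ?_
  have hcard' : card G < #A + #{x | x * a ∈ A} := by
    rw [show #{x | x * a ∈ A} = #A from card_equiv (Equiv.mulRight a) (by simp)]
    omega
  obtain ⟨x, hx⟩ := inter_nonempty_of_card_lt_card_add_card (subset_univ _) (subset_univ _) hcard'
  simp only [mem_inter, mem_filter, mem_univ, true_and] at hx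
  have : x * a = x := hA hx.2 hx.1 (by rw [map_mul, ha, mul_one])
  simpa using this

theorem exists_injective_monoidHom_of_card_lt {G K : Type*} [Group G] [Group K] [Fintype G]
    (f : G → K) (Z : Finset (G × G)) (hZ : 7 * card G ^ 2 < 9 * #Z)
    (hmul : ∀ p ∈ Z, f (p.1 * p.2) = f p.1 * f p.2)
    (hinj : Set.InjOn f (Prod.fst '' (Z : Set (G × G)))) :
    ∃ h : G →* K, Injective h := by
  classical
  have hdefect : 9 * #(defectPairs f) < 2 * card G ^ 2 := by
    have : defectPairs f ⊆ Zᶜ := fun p hp => mem_compl.2 fun hpZ => (mem_filter.1 hp).2 (hmul p hpZ)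
    have := card_le_card this
    have := card_compl_add_card Z
    rw [card_prod, ← sq] at this
    omega
  obtain ⟨h, hh⟩ := exists_monoidHom_eq_of_card_defectPairs_lt f hdefect
  set A : Finset G := {x | card G ≤ 3 * #{y | (x, y) ∈ Z}}
  have hA : 2 * card G < 3 * #A := card_heavy_rows_gt Z (by rw [← sq]; omega)
  have hAZ {x : G} (hx : x ∈ A) : h x = f x ∧ x ∈ Prod.fst '' (Z : Set (G × G)) := by
    have hrow : card G ≤ 3 * #{y | (x, y) ∈ Z} := (mem_filter.1 hx).2
    obtain ⟨y, hy⟩ : ({y | (x, y) ∈ Z} : Finset G).Nonempty :=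
      Finset.card_pos.1 (by have := Fintype.card_pos (α := G); omega)
    refine ⟨hh x (hrow.trans ?_), ⟨(x, y), (mem_filter.1 hy).2, rfl⟩⟩
    exact Nat.mul_le_mul_left 3 (card_le_card fun y hy => by
      simp only [mem_filter, mem_univ, true_and] at hy ⊢; exact hmul _ hy)
  refine ⟨h, h.injective_of_injOn_of_card_lt A (fun x hx y hy hxy => ?_) (by omega)⟩
  exact hinj (hAZ hx).2 (hAZ hy).2 (by rw [← (hAZ hx).1, ← (hAZ hy).1, hxy])

theorem stmt_4_general {G K : Type*} {S : Type*} [Group G] [Group K] [Finite G]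
    (γ : G → S) (κ : K → S)
    (hγ : Function.Injective γ) (hκ : Function.Injective κ)
    (hZ : 9 * Nat.card {p : G × G // ∃ x' y' : K,
        γ p.1 = κ x' ∧ γ p.2 = κ y' ∧ γ (p.1 * p.2) = κ (x' * y')} > 7 * (Nat.card G) ^ 2) :
    ∃ ψ : G →* K, Function.Injective ψ := by
  classical
  cases nonempty_fintype G
  rw [Nat.card_eq_fintype_card, Fintype.card_subtype, Nat.card_eq_fintype_card] at hZ
  set Z : Finset (G × G) :=
    {p | ∃ x' y' : K, γ p.1 = κ x' ∧ γ p.2 = κ y' ∧ γ (p.1 * p.2) = κ (x' * y')}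
  set f : G → K := invFun κ ∘ γ
  have hf {x : G} {x' : K} (h : γ x = κ x') : f x = x' := by
    simp only [f, comp_apply, h, leftInverse_invFun hκ x']
  have hZf {p : G × G} (hp : p ∈ Z) : f (p.1 * p.2) = f p.1 * f p.2 ∧ γ p.1 = κ (f p.1) := by
    obtain ⟨x', y', hx, hy, hxy⟩ := (mem_filter.1 hp).2
    rw [hf hx, hf hy, hf hxy]
    exact ⟨rfl, hx⟩
  refine exists_injective_monoidHom_of_card_lt f Z hZ (fun p hp => (hZf hp).1) ?_
  rintro _ ⟨p, hp, rfl⟩ _ ⟨q, hq, rfl⟩ hpq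
  exact hγ (by rw [(hZf hp).2, (hZf hq).2, hpq])

theorem stmt_4 {G K : Type*} {S : Type*} [Group G] [Group K] [Finite G] [Finite K]
    (hGK : Nat.card G ≤ Nat.card K) (hS : Nat.card S ≥ Nat.card K)
    (γ : G → S) (κ : K → S)
    (hγ : Function.Injective γ) (hκ : Function.Injective κ)
    (hZ : 9 * Nat.card {p : G × G // ∃ x' y' : K,
        γ p.1 = κ x' ∧ γ p.2 = κ y' ∧ γ (p.1 * p.2) = κ (x' * y')} > 7 * (Nat.card G) ^ 2) :
    ∃ ψ : G →* K, Function.Injective ψ :=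
  stmt_4_general γ κ hγ hκ hZ
end

section
/- Let G be a finite group, K a group, and f : G → K a function. For x ∈ G define h(x) as a most frequent value of f(x·y)·f(y)⁻¹ over y ∈ G. If for every x ∈ G the number of y with f(x·y)·f(y)⁻¹ = h(x) exceeds (2/3)·|G|, and #{(x,y) ∈ G² : f(x·y) = f(x)·f(y)} > (7/9)|G|², then #{x ∈ G : f(x) = h(x)} ≥ (5/9)|G|. -/
theorem stmt_10 {G K : Type*} [Group G] [Group K] [Finite G]
    (f : G → K) (h : G → K)
    (hmaj : ∀ x : G, ∀ z : K,
      Nat.card {y : G // f (x * y) * (f y)⁻¹ = z} ≤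
        Nat.card {y : G // f (x * y) * (f y)⁻¹ = h x})
    (h23 : ∀ x : G, 3 * Nat.card {y : G // f (x * y) * (f y)⁻¹ = h x} > 2 * Nat.card G)
    (h79 : 9 * Nat.card {p : G × G // f (p.1 * p.2) = f p.1 * f p.2} > 7 * (Nat.card G) ^ 2) :
    9 * Nat.card {x : G // f x = h x} ≥ 5 * Nat.card G := by
  classical
  have : Fintype G := Fintype.ofFinite G
  set n := Nat.card G with hn
  have hn1 : 1 ≤ n := Nat.one_le_iff_ne_zero.mpr (Nat.card_ne_zero.mpr ⟨⟨1⟩, inferInstance⟩)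
  set c : G → ℕ := fun x => Nat.card {y : G // f (x * y) * (f y)⁻¹ = f x} with hc
  set d : G → ℕ := fun x => Nat.card {y : G // f (x * y) * (f y)⁻¹ = h x} with hd
  -- the pair count equals ∑ c x
  have hsum : Nat.card {p : G × G // f (p.1 * p.2) = f p.1 * f p.2} = ∑ x : G, c x := by
    have e : {p : G × G // f (p.1 * p.2) = f p.1 * f p.2} ≃
        Σ x : G, {y : G // f (x * y) * (f y)⁻¹ = f x} :=
      { toFun := fun p => ⟨p.1.1, p.1.2, by
          have := p.2; rw [mul_inv_eq_iff_eq_mul]; simpa [mul_comm] using this⟩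
        invFun := fun s => ⟨(s.1, s.2.1), by
          have := s.2.2; rw [mul_inv_eq_iff_eq_mul] at this; simpa [mul_comm] using this⟩
        left_inv := fun _ => rfl
        right_inv := fun _ => rfl }
    rw [Nat.card_congr e]
    simp [Nat.card_eq_fintype_card, hc]
  -- for bad x, disjointness gives c x + d x ≤ n
  have hdisj : ∀ x : G, f x ≠ h x → c x + d x ≤ n := by
    intro x hx
    have hc' : c x = (Finset.univ.filter fun y => f (x * y) * (f y)⁻¹ = f x).card := by
      simp [hc, Nat.card_eq_fintype_card, Fintype.card_subtype]
    have hd' : d x = (Finset.univ.filter fun y => f (x * y) * (f y)⁻¹ = h x).card := by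
      simp [hd, Nat.card_eq_fintype_card, Fintype.card_subtype]
    rw [hc', hd', ← Finset.card_union_of_disjoint]
    · calc _ ≤ (Finset.univ : Finset G).card := Finset.card_le_univ _
        _ = n := by simp [hn, Nat.card_eq_fintype_card]
    · rw [Finset.disjoint_left]
      intro y hy1 hy2
      simp only [Finset.mem_filter] at hy1 hy2
      exact hx (hy1.2 ▸ hy2.2)
  have hbad : ∀ x : G, f x ≠ h x → 3 * c x ≤ n - 1 := by
    intro x hx
    have h1 : 2 * n < 3 * d x := h23 x
    have h2 := hdisj x hx
    omega
  have hcle : ∀ x : G, c x ≤ n := fun x =>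
    Finite.card_subtype_le (fun y : G => f (x * y) * (f y)⁻¹ = f x)
  -- bound the sum
  have hsumle : ∑ x : G, 3 * c x ≤ ∑ x : G, (if f x = h x then 3 * n else n - 1) := by
    apply Finset.sum_le_sum
    intro x _
    by_cases hx : f x = h x
    · simp only [hx, if_pos]
      have := hcle x; omega
    · simp only [hx, if_neg, if_false]
      exact hbad x hx
  set a := Nat.card {x : G // f x = h x} with ha
  have ha' : a = (Finset.univ.filter fun x => f x = h x).card := by
    simp [ha, Nat.card_eq_fintype_card, Fintype.card_subtype]
  have hsplit : ∑ x : G, (if f x = h x then 3 * n else n - 1)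
      = a * (3 * n) + (n - a) * (n - 1) := by
    rw [Finset.sum_ite, Finset.sum_const, Finset.sum_const, smul_eq_mul, smul_eq_mul, ha']
    congr 2
    have := Finset.card_filter_add_card_filter_not
      (s := (Finset.univ : Finset G)) (p := fun x => f x = h x)
    have hcard : (Finset.univ : Finset G).card = n := by simp [hn, Nat.card_eq_fintype_card]
    simp only [hcard] at this
    omega
  have haln : a ≤ n := Finite.card_subtype_le (fun x : G => f x = h x)
  have key : 7 * n ^ 2 < 3 * (a * (3 * n) + (n - a) * (n - 1)) := by
    calc 7 * n ^ 2 < 9 * Nat.card {p : G × G // f (p.1 * p.2) = f p.1 * f p.2} := h79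
      _ = 3 * ∑ x : G, 3 * c x := by
          rw [hsum, show (9:ℕ) = 3 * 3 from rfl, mul_assoc, Finset.mul_sum]
      _ ≤ 3 * (a * (3 * n) + (n - a) * (n - 1)) := by
          rw [← hsplit]; exact Nat.mul_le_mul_left 3 hsumle
  -- final arithmetic
  obtain ⟨b, hb⟩ : ∃ b, n = a + b := ⟨n - a, by omega⟩
  obtain ⟨m, hm⟩ : ∃ m, n = m + 1 := ⟨n - 1, by omega⟩
  have key2 : 7 * n ^ 2 < 3 * (a * (3 * n) + b * m) := by
    rwa [show n - a = b by omega, show n - 1 = m by omega] at key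
  nlinarith [key2, hb, hm, hn1]
end
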